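/- (Theorem 5.1, domain parametrization.) Let Ã ∈ M be closed, corresponding to T : V → W. Then D(Ã) = {v + A_γ^{-1}(T z + f) + z : v ∈ D(A_min), z ∈ D(T), f ∈ Z' ⊖ W}, where Z' ⊖ W denotes the orthogonal complement of W in Z'; moreover, for each u ∈ D(Ã) the elements v, z, f in this representation are uniquely determined by u. -/

import Mathlib

noncomputable section

open Filter Topology

namespace GrubbExt

variable {H : Type*} [NormedAddCommGroup H] [InnerProductSpace ℂ H] [CompleteSpace H]

/-- The inclusion of a closed subspace composed with the orthogonal projection onto it,
as a continuous linear map `H →L[ℂ] H`.  This is `i_K ∘ pr_K` in the notation of the paper. -/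
def projCl (K : Submodule ℂ H) (hK : IsClosed (K : Set H)) : H →L[ℂ] H :=
  haveI : CompleteSpace K := hK.completeSpace_coe
  K.subtypeL.comp (K.orthogonalProjectionOnto)

/-- `R` is the (everywhere defined, bounded) inverse of `P - lam`. -/
structure IsResolvent (P : H →ₗ.[ℂ] H) (lam : ℂ) (R : H →L[ℂ] H) : Prop where
  mem : ∀ f : H, R f ∈ P.domain
  left : ∀ u : P.domain, R (P u - lam • (u : H)) = u
  right : ∀ f : H, P ⟨R f, mem f⟩ - lam • R f = f

/-- `E^λ := I + λ(A_γ - λ)^{-1}`, given the resolvent `R = (A_γ - λ)^{-1}`. -/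
def Eop (lam : ℂ) (R : H →L[ℂ] H) : H →L[ℂ] H := ContinuousLinearMap.id ℂ H + lam • R

/-- `E'^{λ̄} := I + λ̄(A_γ^* - λ̄)^{-1}`, given the resolvent `R' = (A_γ^* - λ̄)^{-1}`. -/
def Eop' (lam : ℂ) (R' : H →L[ℂ] H) : H →L[ℂ] H :=
  ContinuousLinearMap.id ℂ H + (starRingEnd ℂ lam) • R'

/-- The resolvent set of a partially defined operator. -/
def resSet (P : H →ₗ.[ℂ] H) : Set ℂ := {lam | ∃ R : H →L[ℂ] H, IsResolvent P lam R}

/-- The set of "Rayleigh quotients" `Re⟨Pu,u⟩` over unit vectors `u` in the domain of `P`;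
the lower bound `m(P)` is the infimum of this set. -/
def raySet (P : H →ₗ.[ℂ] H) : Set ℝ :=
  {r | ∃ u : P.domain, ‖(u : H)‖ = 1 ∧ r = (inner ℂ (P u) (u : H) : ℂ).re}

/-- The abstract set-up of Grubb's extension theory: a dual pair `A_min, A'_min` of closed
densely defined operators in a Hilbert space `H`, together with a reference operator `A_γ`
lying between `A_min` and `A_max := (A'_min)*`, which is bijective with bounded inverse
(and whose adjoint is likewise bijective with bounded inverse). -/
structure Setup (H : Type*) [NormedAddCommGroup H] [InnerProductSpace ℂ H]
    [CompleteSpace H] where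
  Amin : H →ₗ.[ℂ] H
  Amin' : H →ₗ.[ℂ] H
  closed_Amin : IsClosed (Amin.graph : Set (H × H))
  closed_Amin' : IsClosed (Amin'.graph : Set (H × H))
  dense_Amin : Dense (Amin.domain : Set H)
  dense_Amin' : Dense (Amin'.domain : Set H)
  Amin_le_max : Amin ≤ Amin'.adjoint
  Amin'_le_max' : Amin' ≤ Amin.adjoint
  Agam : H →ₗ.[ℂ] H
  Amin_le_Agam : Amin ≤ Agam
  Agam_le_max : Agam ≤ Amin'.adjoint
  Agaminv : H →L[ℂ] H
  Agaminv_mem : ∀ f : H, Agaminv f ∈ Agam.domain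
  Agaminv_left : ∀ u : Agam.domain, Agaminv (Agam u) = u
  Agaminv_right : ∀ f : H, Agam ⟨Agaminv f, Agaminv_mem f⟩ = f
  Agamstarinv : H →L[ℂ] H
  Agamstarinv_mem : ∀ f : H, Agamstarinv f ∈ Agam.adjoint.domain
  Agamstarinv_left : ∀ v : Agam.adjoint.domain, Agamstarinv (Agam.adjoint v) = v
  Agamstarinv_right : ∀ f : H, Agam.adjoint ⟨Agamstarinv f, Agamstarinv_mem f⟩ = f

namespace Setup

variable (S : Setup H)

/-- `A_max := (A'_min)*`. -/
def Amax : H →ₗ.[ℂ] H := S.Amin'.adjoint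

/-- `A'_max := (A_min)*`. -/
def Amax' : H →ₗ.[ℂ] H := S.Amin.adjoint

/-- `u_ζ := u - A_γ^{-1} A_max u`, the nullspace component of `u ∈ D(A_max)`. -/
def uzeta (u : S.Amax.domain) : H := (u : H) - S.Agaminv (S.Amax u)

/-- `v_{ζ'} := v - (A_γ^*)^{-1} A'_max v`, the nullspace component of `v ∈ D(A'_max)`. -/
def vzeta (v : S.Amax'.domain) : H := (v : H) - S.Agamstarinv (S.Amax' v)

/-- `Z := ker A_max`, as a submodule of `H`. -/
def Zker : Submodule ℂ H := (LinearMap.ker S.Amax.toFun).map S.Amax.domain.subtype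

/-- `Z' := ker A'_max`, as a submodule of `H`. -/
def Zker' : Submodule ℂ H := (LinearMap.ker S.Amax'.toFun).map S.Amax'.domain.subtype

lemma coe_Zker :
    (S.Zker : Set H) = ⋂ v : S.Amin'.domain, {y : H | (inner ℂ y (S.Amin' v) : ℂ) = 0} := by
  ext y
  simp only [Set.mem_iInter, Set.mem_setOf_eq, SetLike.mem_coe, Zker, Submodule.mem_map,
    LinearMap.mem_ker]
  constructor
  · rintro ⟨u, hu, rfl⟩ v
    have h := (LinearPMap.adjoint_isFormalAdjoint S.dense_Amin') u v
    have hu' : S.Amin'.adjoint u = 0 := hu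
    rw [hu'] at h
    simpa using h.symm
  · intro h
    have hmem : y ∈ S.Amax.domain := by
      refine LinearPMap.mem_adjoint_domain_of_exists _ ⟨0, fun x => ?_⟩
      simp [h x]
    refine ⟨⟨y, hmem⟩, ?_, rfl⟩
    exact LinearPMap.adjoint_apply_eq S.dense_Amin' ⟨y, hmem⟩ fun x => by simp [h x]

lemma isClosed_Zker : IsClosed (S.Zker : Set H) := by
  rw [S.coe_Zker]
  exact isClosed_iInter fun v =>
    isClosed_eq (Continuous.inner continuous_id continuous_const) continuous_const

lemma coe_Zker' :
    (S.Zker' : Set H) = ⋂ v : S.Amin.domain, {y : H | (inner ℂ y (S.Amin v) : ℂ) = 0} := by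
  ext y
  simp only [Set.mem_iInter, Set.mem_setOf_eq, SetLike.mem_coe, Zker', Submodule.mem_map,
    LinearMap.mem_ker]
  constructor
  · rintro ⟨u, hu, rfl⟩ v
    have h := (LinearPMap.adjoint_isFormalAdjoint S.dense_Amin) u v
    have hu' : S.Amin.adjoint u = 0 := hu
    rw [hu'] at h
    simpa using h.symm
  · intro h
    have hmem : y ∈ S.Amax'.domain := by
      refine LinearPMap.mem_adjoint_domain_of_exists _ ⟨0, fun x => ?_⟩
      simp [h x]
    refine ⟨⟨y, hmem⟩, ?_, rfl⟩
    exact LinearPMap.adjoint_apply_eq S.dense_Amin ⟨y, hmem⟩ fun x => by simp [h x]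

lemma isClosed_Zker' : IsClosed (S.Zker' : Set H) := by
  rw [S.coe_Zker']
  exact isClosed_iInter fun v =>
    isClosed_eq (Continuous.inner continuous_id continuous_const) continuous_const

/-- The orthogonal projection onto `Z = ker A_max`. -/
def projZ : H →L[ℂ] H := projCl S.Zker S.isClosed_Zker

/-- The orthogonal projection onto `Z' = ker A'_max`. -/
def projZ' : H →L[ℂ] H := projCl S.Zker' S.isClosed_Zker'

variable (At : H →ₗ.[ℂ] H)

/-- `D(T) = {u_ζ : u ∈ D(Ã)}`, the set of nullspace components of elements of `D(Ã)`. -/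
def dzeta : Set H := {x | ∃ u : S.Amax.domain, (u : H) ∈ At.domain ∧ x = S.uzeta u}

/-- `{v_{ζ'} : v ∈ D(Ã*)}`. -/
def dzeta' : Set H := {x | ∃ v : S.Amax'.domain, (v : H) ∈ At.adjoint.domain ∧ x = S.vzeta v}

/-- `V := closure {u_ζ : u ∈ D(Ã)}`. -/
def Vsub : Submodule ℂ H := (Submodule.span ℂ (S.dzeta At)).topologicalClosure

/-- `W := closure {v_{ζ'} : v ∈ D(Ã*)}`. -/
def Wsub : Submodule ℂ H := (Submodule.span ℂ (S.dzeta' At)).topologicalClosure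

lemma isClosed_Vsub : IsClosed ((S.Vsub At : Set H)) :=
  Submodule.isClosed_topologicalClosure _

lemma isClosed_Wsub : IsClosed ((S.Wsub At : Set H)) :=
  Submodule.isClosed_topologicalClosure _

/-- The orthogonal projection onto `V`. -/
def projV : H →L[ℂ] H := projCl (S.Vsub At) (S.isClosed_Vsub At)

/-- The orthogonal projection onto `W`. -/
def projW : H →L[ℂ] H := projCl (S.Wsub At) (S.isClosed_Wsub At)

/-- The set `{(u_ζ, pr_W (A_max u)) : u ∈ D(Ã)}`, for a general closed subspace `W`. -/
def TgraphOn (W : Submodule ℂ H) (hW : IsClosed (W : Set H)) : Set (H × H) :=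
  {p | ∃ u : S.Amax.domain, (u : H) ∈ At.domain ∧ p.1 = S.uzeta u ∧
    p.2 = projCl W hW (S.Amax u)}

/-- The graph of the operator `T : V → W` corresponding to `Ã`. -/
def Tgraph : Set (H × H) := S.TgraphOn At (S.Wsub At) (S.isClosed_Wsub At)


/-- `F^λ := I - λ A_γ^{-1}`. -/
def Fop (lam : ℂ) : H →L[ℂ] H := ContinuousLinearMap.id ℂ H - lam • S.Agaminv

/-- `F'^{λ̄} := I - λ̄ (A_γ^*)^{-1}`. -/
def Fop' (lam : ℂ) : H →L[ℂ] H := ContinuousLinearMap.id ℂ H - (starRingEnd ℂ lam) • S.Agamstarinv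

/-- `Z_λ := ker(A_max - λ)`, as a subset of `H`. -/
def ZkerL (lam : ℂ) : Set H :=
  {x | ∃ hx : x ∈ S.Amax.domain, S.Amax ⟨x, hx⟩ = lam • x}

/-- `Z'_{λ̄} := ker(A'_max - λ̄)`, as a subset of `H`. -/
def ZkerL' (lam : ℂ) : Set H :=
  {x | ∃ hx : x ∈ S.Amax'.domain, S.Amax' ⟨x, hx⟩ = (starRingEnd ℂ lam) • x}

/-- `pr^λ_ζ u := u - (A_γ - λ)^{-1}(A_max - λ)u`, given the resolvent `R = (A_γ - λ)^{-1}`. -/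
def uzetaL (lam : ℂ) (R : H →L[ℂ] H) (u : S.Amax.domain) : H :=
  (u : H) - R (S.Amax u - lam • (u : H))

/-- `pr^{λ̄}_{ζ'} v := v - (A_γ^* - λ̄)^{-1}(A'_max - λ̄)v`,
given the resolvent `R' = (A_γ^* - λ̄)^{-1}`. -/
def vzetaL (lam : ℂ) (R' : H →L[ℂ] H) (v : S.Amax'.domain) : H :=
  (v : H) - R' (S.Amax' v - (starRingEnd ℂ lam) • (v : H))

/-- `D(T^λ) = {pr^λ_ζ u : u ∈ D(Ã)}`. -/
def dzetaL (lam : ℂ) (R : H →L[ℂ] H) : Set H :=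
  {x | ∃ u : S.Amax.domain, (u : H) ∈ At.domain ∧ x = S.uzetaL lam R u}

/-- `{pr^{λ̄}_{ζ'} v : v ∈ D(Ã*)}`. -/
def dzetaL' (lam : ℂ) (R' : H →L[ℂ] H) : Set H :=
  {x | ∃ v : S.Amax'.domain, (v : H) ∈ At.adjoint.domain ∧ x = S.vzetaL lam R' v}

/-- `V_λ := closure {pr^λ_ζ u : u ∈ D(Ã)}`. -/
def VLsub (lam : ℂ) (R : H →L[ℂ] H) : Submodule ℂ H :=
  (Submodule.span ℂ (S.dzetaL At lam R)).topologicalClosure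

/-- `W_{λ̄} := closure {pr^{λ̄}_{ζ'} v : v ∈ D(Ã*)}`. -/
def WLsub (lam : ℂ) (R' : H →L[ℂ] H) : Submodule ℂ H :=
  (Submodule.span ℂ (S.dzetaL' At lam R')).topologicalClosure

lemma isClosed_WLsub (lam : ℂ) (R' : H →L[ℂ] H) : IsClosed ((S.WLsub At lam R' : Set H)) :=
  Submodule.isClosed_topologicalClosure _

/-- The orthogonal projection onto `W_{λ̄}`. -/
def projWL (lam : ℂ) (R' : H →L[ℂ] H) : H →L[ℂ] H :=
  projCl (S.WLsub At lam R') (S.isClosed_WLsub At lam R')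

/-- The graph of the operator `T^λ : V_λ → W_{λ̄}` corresponding to `Ã - λ`:
`{(pr^λ_ζ u, pr_{W_{λ̄}}((A_max - λ)u)) : u ∈ D(Ã)}`. -/
def TgraphL (lam : ℂ) (R R' : H →L[ℂ] H) : Set (H × H) :=
  {p | ∃ u : S.Amax.domain, (u : H) ∈ At.domain ∧ p.1 = S.uzetaL lam R u ∧
    p.2 = S.projWL At lam R' (S.Amax u - lam • (u : H))}

/-- `G^λ_{V,W} x := -pr_W (λ E^λ x)`, where `W = W(Ã)`. -/
def Gval (lam : ℂ) (R : H →L[ℂ] H) (x : H) : H :=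
  -(S.projW At (lam • Eop lam R x))

/-- `G^μ_{Z,Z} z := -pr_Z (μ E^μ z)`. -/
def GZval (lam : ℂ) (R : H →L[ℂ] H) (x : H) : H :=
  -(S.projZ (lam • Eop lam R x))

lemma mem_Amax_res {lam : ℂ} {Rt : H →L[ℂ] H} (h2 : At ≤ S.Amax)
    (hRt : IsResolvent At lam Rt) (w : H) :
    S.Agaminv w - Rt (w - lam • S.Agaminv w) ∈ S.Amax.domain :=
  Submodule.sub_mem _ (S.Agam_le_max.1 (S.Agaminv_mem w)) (h2.1 (hRt.mem _))

/-- `M(λ) w := pr_ζ ((I - (Ã - λ)^{-1}(A_max - λ)) A_γ^{-1} w)`, the value of the abstract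
`M`-function on `w`. -/
def Mval {lam : ℂ} {Rt : H →L[ℂ] H} (h2 : At ≤ S.Amax) (hRt : IsResolvent At lam Rt)
    (w : H) : H :=
  S.uzeta ⟨S.Agaminv w - Rt (w - lam • S.Agaminv w), S.mem_Amax_res At h2 hRt w⟩

end Setup

/-!
Every `u ∈ D(A_max)` splits as `u = A_γ⁻¹ (A_max u) + u_ζ` with `u_ζ ∈ Z`, and `H` is the
orthogonal sum of `ran A_min` and `Z'` (the range is closed because `A_min ⊂ A_γ` and `A_γ⁻¹` is
bounded). Splitting `A_max x` for `x ∈ D(Ã)` along `ran A_min ⊕ (Z' ⊖ W) ⊕ W` produces `v`, `f`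
and `y = pr_W (A_max x) = T x_ζ`. Conversely, `x = v + A_γ⁻¹ (T z + f) + z` lies in `D(A_max)`
with `x_ζ = z` and `A_max x = A_min v + T z + f`. As `Ã` is closed, `Ã = Ã**`, so `x ∈ D(Ã)` is
decided by pairing with `D(Ã*)`; by Green's formula this pairing only involves `x_ζ` and
`pr_W (A_max x)`, which agree with those of an element of `D(Ã)`. Uniqueness: `z = x_ζ`,
`T z` is then fixed, and `A_min v + f` is an orthogonal splitting.
-/

open scoped InnerProductSpace LinearPMap

theorem _root_.LinearPMap.apply_eq_of_mem_graph {R E F : Type*} [Ring R] [AddCommGroup E]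
    [Module R E] [AddCommGroup F] [Module R F] {T : E →ₗ.[R] F} {x : E} {w : F}
    (h : (x, w) ∈ T.graph) (hx : x ∈ T.domain) : T ⟨x, hx⟩ = w :=
  T.mem_graph_snd_inj (T.mem_graph ⟨x, hx⟩) h rfl

section LinearPMap

variable {𝕜 E F : Type*} [RCLike 𝕜] [NormedAddCommGroup E] [InnerProductSpace 𝕜 E]
  [NormedAddCommGroup F] [InnerProductSpace 𝕜 F] [CompleteSpace E]

theorem _root_.LinearPMap.adjoint_le_adjoint {A B : E →ₗ.[𝕜] F}
    (hA : Dense (A.domain : Set E)) (h : A ≤ B) : B† ≤ A† :=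
  LinearPMap.IsFormalAdjoint.le_adjoint hA fun x y => by
    rw [LinearPMap.apply_comp_inclusion h]
    exact (LinearPMap.adjoint_isFormalAdjoint (hA.mono h.1)).symm _ y

/-- `T** ⊆ T` for a closed densely defined `T`. -/
theorem _root_.LinearPMap.mem_graph_of_inner_adjoint [CompleteSpace F] {T : E →ₗ.[𝕜] F}
    (hcl : T.IsClosed) (hT : Dense (T.domain : Set E)) {x : E} {w : F}
    (h : ∀ y : T†.domain, ⟪w, (y : F)⟫_𝕜 = ⟪x, T† y⟫_𝕜) : (x, w) ∈ T.graph := by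
  let G : Submodule 𝕜 (WithLp 2 (E × F)) :=
    T.graph.comap (WithLp.linearEquiv 2 𝕜 (E × F)).toLinearMap
  have : CompleteSpace G :=
    (hcl.preimage (WithLp.prod_continuous_ofLp 2 E F)).completeSpace_coe
  suffices WithLp.toLp 2 (x, w) ∈ Gᗮᗮ by rwa [Submodule.orthogonal_orthogonal] at this
  intro q hq
  have hpair : ∀ u : T.domain, ⟪-q.fst, (u : E)⟫_𝕜 = ⟪q.snd, T u⟫_𝕜 := fun u => by
    have h0 : ⟪(u : E), q.fst⟫_𝕜 + ⟪T u, q.snd⟫_𝕜 = 0 := by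
      simpa [WithLp.prod_inner_apply] using hq (WithLp.toLp 2 ((u : E), T u)) (by simp [G])
    rw [inner_neg_left, ← inner_conj_symm, ← inner_conj_symm q.snd,
      eq_neg_of_add_eq_zero_left h0, map_neg, neg_neg]
  have hq2 : q.snd ∈ T†.domain := LinearPMap.mem_adjoint_domain_of_exists _ ⟨_, hpair⟩
  have hadj : ⟪w, q.snd⟫_𝕜 = -⟪x, q.fst⟫_𝕜 := by
    rw [h ⟨q.snd, hq2⟩, LinearPMap.adjoint_apply_eq hT _ hpair, inner_neg_right]
  rw [WithLp.prod_inner_apply, ← inner_conj_symm]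
  change (starRingEnd 𝕜) ⟪x, q.fst⟫_𝕜 + ⟪q.snd, w⟫_𝕜 = 0
  rw [← inner_conj_symm q.snd, hadj, map_neg, add_neg_cancel]

end LinearPMap

lemma projCl_mem (K : Submodule ℂ H) (hK : IsClosed (K : Set H)) (w : H) :
    projCl K hK w ∈ K :=
  have : CompleteSpace K := hK.completeSpace_coe
  K.starProjection_apply_mem w

lemma sub_projCl_mem_orthogonal (K : Submodule ℂ H) (hK : IsClosed (K : Set H)) (w : H) :
    w - projCl K hK w ∈ Kᗮ :=
  have : CompleteSpace K := hK.completeSpace_coe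
  K.sub_starProjection_mem_orthogonal w

namespace Setup

variable (S : Setup H)

lemma dense_domain_Agam : Dense (S.Agam.domain : Set H) :=
  S.dense_Amin.mono S.Amin_le_Agam.1

lemma Agam_adjoint_le_Amax' : S.Agam† ≤ S.Amax' :=
  LinearPMap.adjoint_le_adjoint S.dense_Amin S.Amin_le_Agam

lemma Agaminv_Amin (v : S.Amin.domain) : S.Agaminv (S.Amin v) = v := by
  rw [LinearPMap.apply_comp_inclusion S.Amin_le_Agam, S.Agaminv_left]
  rfl

lemma Agaminv_mem_graph_Amax (w : H) : (S.Agaminv w, w) ∈ S.Amax.graph :=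
  LinearPMap.le_graph_of_le S.Agam_le_max (by
    simpa only [S.Agaminv_right] using S.Agam.mem_graph ⟨_, S.Agaminv_mem w⟩)

lemma Agamstarinv_mem_graph_Amax' (w : H) : (S.Agamstarinv w, w) ∈ S.Amax'.graph :=
  LinearPMap.le_graph_of_le S.Agam_adjoint_le_Amax' (by
    simpa only [S.Agamstarinv_right] using S.Agam†.mem_graph ⟨_, S.Agamstarinv_mem w⟩)

lemma mem_Zker_iff {z : H} : z ∈ S.Zker ↔ (z, 0) ∈ S.Amax.graph := by
  simp [Zker, LinearPMap.mem_graph_iff, and_comm]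

lemma mem_Zker'_iff {z : H} : z ∈ S.Zker' ↔ (z, 0) ∈ S.Amax'.graph := by
  simp [Zker', LinearPMap.mem_graph_iff, and_comm]

lemma uzeta_mem_Zker (u : S.Amax.domain) : S.uzeta u ∈ S.Zker := by
  rw [mem_Zker_iff, ← sub_self (S.Amax u)]
  exact S.Amax.graph.sub_mem (S.Amax.mem_graph u) (S.Agaminv_mem_graph_Amax _)

lemma vzeta_mem_Zker' (v : S.Amax'.domain) : S.vzeta v ∈ S.Zker' := by
  rw [mem_Zker'_iff, ← sub_self (S.Amax' v)]
  exact S.Amax'.graph.sub_mem (S.Amax'.mem_graph v) (S.Agamstarinv_mem_graph_Amax' _)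

/-- Green's formula: the boundary form of `A_max` only sees the nullspace components. -/
lemma inner_Amax_sub_inner_Amax' (u : S.Amax.domain) (v : S.Amax'.domain) :
    ⟪S.Amax u, (v : H)⟫_ℂ - ⟪(u : H), S.Amax' v⟫_ℂ
      = ⟪S.Amax u, S.vzeta v⟫_ℂ - ⟪S.uzeta u, S.Amax' v⟫_ℂ := by
  have key : ⟪S.Amax u, S.Agamstarinv (S.Amax' v)⟫_ℂ
      = ⟪S.Agaminv (S.Amax u), S.Amax' v⟫_ℂ := by
    have h := (LinearPMap.adjoint_isFormalAdjoint S.dense_domain_Agam)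
      ⟨_, S.Agamstarinv_mem (S.Amax' v)⟩ ⟨_, S.Agaminv_mem (S.Amax u)⟩
    rw [S.Agamstarinv_right, S.Agaminv_right] at h
    rw [← inner_conj_symm, ← h, inner_conj_symm]
  simp only [uzeta, vzeta, inner_sub_left, inner_sub_right, key]
  ring

lemma Zker'_eq_orthogonal_range : S.Zker' = (LinearMap.range S.Amin.toFun)ᗮ := by
  ext y
  rw [← SetLike.mem_coe, coe_Zker', Submodule.mem_orthogonal']
  simp only [Set.mem_iInter, Set.mem_ofPred_eq, LinearMap.mem_range, forall_exists_index,
    forall_apply_eq_imp_iff]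
  rfl

lemma Amin_mem_orthogonal_Zker' (v : S.Amin.domain) : S.Amin v ∈ S.Zker'ᗮ := by
  rw [Zker'_eq_orthogonal_range]
  exact Submodule.le_orthogonal_orthogonal _ ⟨v, rfl⟩

/-- `A_min` has closed range: `A_γ⁻¹` is bounded and the graph of `A_min` is closed. -/
lemma mem_graph_Amin_of_mem_orthogonal_Zker' {g : H} (hg : g ∈ S.Zker'ᗮ) :
    (S.Agaminv g, g) ∈ S.Amin.graph := by
  rw [Zker'_eq_orthogonal_range, Submodule.orthogonal_orthogonal_eq_closure, ← SetLike.mem_coe,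
    Submodule.topologicalClosure_coe] at hg
  have hrange : (LinearMap.range S.Amin.toFun : Set H)
      ⊆ (fun w => (S.Agaminv w, w)) ⁻¹' S.Amin.graph := by
    rintro _ ⟨v, rfl⟩
    show (S.Agaminv (S.Amin v), S.Amin v) ∈ S.Amin.graph
    simpa only [S.Agaminv_Amin] using S.Amin.mem_graph v
  exact closure_minimal hrange
    (S.closed_Amin.preimage (S.Agaminv.continuous.prodMk continuous_id)) hg

lemma eq_of_Amin_add_eq {v v' : S.Amin.domain} {f f' : H} (hf : f ∈ S.Zker')
    (hf' : f' ∈ S.Zker') (h : S.Amin v + f = S.Amin v' + f') : v = v' ∧ f = f' := by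
  have hd : S.Amin (v - v') = f' - f := by
    rw [LinearPMap.map_sub]
    linear_combination (norm := module) h
  have hzero : S.Amin (v - v') = 0 := by
    refine (Submodule.mem_bot ℂ).mp ?_
    rw [← Submodule.inf_orthogonal_eq_bot S.Zker']
    exact ⟨hd ▸ S.Zker'.sub_mem hf' hf, S.Amin_mem_orthogonal_Zker' _⟩
  have hvv : v = v' := by
    rw [← sub_eq_zero]
    exact Subtype.ext (by rw [← S.Agaminv_Amin (v - v'), hzero, map_zero]; rfl)
  refine ⟨hvv, ?_⟩
  rwa [hvv, add_right_inj] at h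

variable {S} in
lemma exists_mem_domain_Amax_of_eq_add {x v z w : H} (hv : v ∈ S.Amin.domain)
    (hz : z ∈ S.Zker) (hx : x = v + S.Agaminv w + z) :
    ∃ hxd : x ∈ S.Amax.domain, S.Amax ⟨x, hxd⟩ = S.Amin ⟨v, hv⟩ + w ∧ S.uzeta ⟨x, hxd⟩ = z := by
  have hgraph : (x, S.Amin ⟨v, hv⟩ + w) ∈ S.Amax.graph := by
    simpa only [hx, Prod.mk_add_mk, add_zero] using
      S.Amax.graph.add_mem (S.Amax.graph.add_mem
        (LinearPMap.le_graph_of_le S.Amin_le_max (S.Amin.mem_graph ⟨v, hv⟩))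
        (S.Agaminv_mem_graph_Amax w)) ((S.mem_Zker_iff).mp hz)
  have hxd := LinearPMap.mem_domain_of_mem_graph hgraph
  have hAx := LinearPMap.apply_eq_of_mem_graph hgraph hxd
  refine ⟨hxd, hAx, ?_⟩
  rw [uzeta, hAx, map_add, S.Agaminv_Amin ⟨v, hv⟩]
  show x - (v + S.Agaminv w) = z
  rw [hx]
  abel

variable (At : H →ₗ.[ℂ] H)

lemma Wsub_le_Zker' : S.Wsub At ≤ S.Zker' := by
  refine Submodule.topologicalClosure_minimal _ ?_ S.isClosed_Zker'
  rw [Submodule.span_le]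
  rintro _ ⟨v, -, rfl⟩
  exact S.vzeta_mem_Zker' v

lemma vzeta_mem_Wsub {v : S.Amax'.domain} (hv : (v : H) ∈ At†.domain) :
    S.vzeta v ∈ S.Wsub At :=
  Submodule.le_topologicalClosure _ (Submodule.subset_span ⟨v, hv, rfl⟩)

lemma fst_mem_Zker_of_mem_Tgraph {z y : H} (h : (z, y) ∈ S.Tgraph At) : z ∈ S.Zker := by
  obtain ⟨u, -, rfl, -⟩ := h
  exact S.uzeta_mem_Zker u

lemma mem_domain_of_uzeta_eq (h1 : S.Amin ≤ At) (h2 : At ≤ S.Amax)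
    (hcl : IsClosed (At.graph : Set (H × H))) {x u : S.Amax.domain} (hu : (u : H) ∈ At.domain)
    (hζ : S.uzeta x = S.uzeta u) (hW : S.Amax x - S.Amax u ∈ (S.Wsub At)ᗮ) :
    (x : H) ∈ At.domain := by
  have hdense : Dense (At.domain : Set H) := S.dense_Amin.mono h1.1
  have hadj : At† ≤ S.Amax' := LinearPMap.adjoint_le_adjoint S.dense_Amin h1
  refine LinearPMap.mem_domain_of_mem_graph
    (LinearPMap.mem_graph_of_inner_adjoint hcl hdense (w := S.Amax x) fun y => ?_)
  set y' := Submodule.inclusion hadj.1 y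
  have hAt : At† y = S.Amax' y' := LinearPMap.apply_comp_inclusion hadj y
  have hu0 : ⟪S.Amax u, (y' : H)⟫_ℂ = ⟪(u : H), S.Amax' y'⟫_ℂ := by
    have hAtu : At ⟨u, hu⟩ = S.Amax u := LinearPMap.apply_comp_inclusion h2 ⟨u, hu⟩
    rw [← hAt, ← hAtu]
    exact (LinearPMap.adjoint_isFormalAdjoint hdense).symm ⟨u, hu⟩ y
  have hWy : ⟪S.Amax x - S.Amax u, S.vzeta y'⟫_ℂ = 0 :=
    Submodule.inner_left_of_mem_orthogonal (S.vzeta_mem_Wsub At y.2) hW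
  have hgreen_x := S.inner_Amax_sub_inner_Amax' x y'
  have hgreen_u := S.inner_Amax_sub_inner_Amax' u y'
  rw [inner_sub_left] at hWy
  rw [hζ] at hgreen_x
  change ⟪S.Amax x, (y' : H)⟫_ℂ = ⟪(x : H), At† y⟫_ℂ
  rw [hAt]
  linear_combination hgreen_x - hgreen_u + hu0 + hWy

lemma exists_decomposition_of_mem_domain (h2 : At ≤ S.Amax) {x : H} (hx : x ∈ At.domain) :
    ∃ v z y f : H, v ∈ S.Amin.domain ∧ (z, y) ∈ S.Tgraph At ∧
      f ∈ S.Zker' ⊓ (S.Wsub At)ᗮ ∧ x = v + S.Agaminv (y + f) + z := by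
  set u : S.Amax.domain := ⟨x, h2.1 hx⟩
  set w := S.Amax u
  set q := projCl S.Zker' S.isClosed_Zker' w
  set y := projCl (S.Wsub At) (S.isClosed_Wsub At) w
  have hwq : w - q ∈ S.Zker'ᗮ := sub_projCl_mem_orthogonal _ _ w
  refine ⟨S.Agaminv (w - q), S.uzeta u, y, q - y,
    LinearPMap.mem_domain_of_mem_graph (S.mem_graph_Amin_of_mem_orthogonal_Zker' hwq),
    ⟨u, hx, rfl, rfl⟩, ⟨?_, ?_⟩, ?_⟩
  · exact S.Zker'.sub_mem (projCl_mem _ _ w) (S.Wsub_le_Zker' At (projCl_mem _ _ w))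
  · have hqy := (S.Wsub At)ᗮ.sub_mem (sub_projCl_mem_orthogonal _ (S.isClosed_Wsub At) w)
      (Submodule.orthogonal_le (S.Wsub_le_Zker' At) hwq)
    rwa [sub_sub_sub_cancel_left] at hqy
  · simp only [uzeta, map_add, map_sub]
    abel

lemma mem_domain_of_decomposition (h1 : S.Amin ≤ At) (h2 : At ≤ S.Amax)
    (hcl : IsClosed (At.graph : Set (H × H))) {x v z y f : H} (hv : v ∈ S.Amin.domain)
    (hzy : (z, y) ∈ S.Tgraph At) (hf : f ∈ S.Zker' ⊓ (S.Wsub At)ᗮ)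
    (hx : x = v + S.Agaminv (y + f) + z) : x ∈ At.domain := by
  obtain ⟨hxd, hAx, hζ⟩ :=
    exists_mem_domain_Amax_of_eq_add hv (S.fst_mem_Zker_of_mem_Tgraph At hzy) hx
  obtain ⟨u, hu, rfl, rfl⟩ := hzy
  refine S.mem_domain_of_uzeta_eq At h1 h2 hcl (x := ⟨x, hxd⟩) hu hζ ?_
  have hW := (S.Wsub At)ᗮ.sub_mem
    ((S.Wsub At)ᗮ.add_mem
      (Submodule.orthogonal_le (S.Wsub_le_Zker' At) (S.Amin_mem_orthogonal_Zker' ⟨v, hv⟩)) hf.2)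
    (sub_projCl_mem_orthogonal _ (S.isClosed_Wsub At) (S.Amax u))
  rw [hAx]
  convert hW using 1
  abel

lemma eq_of_decomposition_eq {T : H →ₗ.[ℂ] H} (hT : (T.graph : Set (H × H)) = S.Tgraph At)
    {v z y f v' z' y' f' : H} (hv : v ∈ S.Amin.domain) (hzy : (z, y) ∈ T.graph)
    (hf : f ∈ S.Zker') (hv' : v' ∈ S.Amin.domain) (hzy' : (z', y') ∈ T.graph)
    (hf' : f' ∈ S.Zker') (h : v + S.Agaminv (y + f) + z = v' + S.Agaminv (y' + f') + z') :
    v = v' ∧ z = z' ∧ f = f' := by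
  have hZ {z y : H} (hzy : (z, y) ∈ T.graph) : z ∈ S.Zker :=
    S.fst_mem_Zker_of_mem_Tgraph At (by rwa [← hT])
  obtain ⟨_, hAx, hζ⟩ := exists_mem_domain_Amax_of_eq_add hv (hZ hzy) rfl
  obtain ⟨_, hAx', hζ'⟩ := exists_mem_domain_Amax_of_eq_add hv' (hZ hzy') h
  have hzz : z = z' := hζ.symm.trans hζ'
  obtain rfl : y = y' := T.mem_graph_snd_inj hzy hzy' hzz
  obtain ⟨hvv, hff⟩ := S.eq_of_Amin_add_eq hf hf' (v := ⟨v, hv⟩) (v' := ⟨v', hv'⟩) <| by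
    linear_combination (norm := module) hAx.symm.trans hAx'
  exact ⟨congrArg Subtype.val hvv, hzz, hff⟩

end Setup

theorem statement_8 (S : Setup H) (At : H →ₗ.[ℂ] H)
    (h1 : S.Amin ≤ At) (h2 : At ≤ S.Amax)
    (hcl : IsClosed (At.graph : Set (H × H)))
    (T : H →ₗ.[ℂ] H) (hT : (T.graph : Set (H × H)) = S.Tgraph At) :
    ∀ x : H,
      (x ∈ At.domain ↔ ∃ v z y f : H, v ∈ S.Amin.domain ∧ (z, y) ∈ T.graph ∧
          f ∈ S.Zker' ⊓ (S.Wsub At)ᗮ ∧ x = v + S.Agaminv (y + f) + z) ∧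
      (∀ v z y f v' z' y' f' : H, v ∈ S.Amin.domain → (z, y) ∈ T.graph →
        f ∈ S.Zker' ⊓ (S.Wsub At)ᗮ →
        v' ∈ S.Amin.domain → (z', y') ∈ T.graph →
        f' ∈ S.Zker' ⊓ (S.Wsub At)ᗮ →
        v + S.Agaminv (y + f) + z = v' + S.Agaminv (y' + f') + z' →
        v = v' ∧ z = z' ∧ f = f') := by
  have hTgraph {z y : H} : (z, y) ∈ T.graph ↔ (z, y) ∈ S.Tgraph At := by
    rw [← SetLike.mem_coe, hT]
  refine fun x => ⟨⟨fun hx => ?_, ?_⟩, ?_⟩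
  · obtain ⟨v, z, y, f, hv, hzy, hf, rfl⟩ := S.exists_decomposition_of_mem_domain At h2 hx
    exact ⟨v, z, y, f, hv, hTgraph.mpr hzy, hf, rfl⟩
  · rintro ⟨v, z, y, f, hv, hzy, hf, hx⟩
    exact S.mem_domain_of_decomposition At h1 h2 hcl hv (hTgraph.mp hzy) hf hx
  · intro v z y f v' z' y' f' hv hzy hf hv' hzy' hf' h
    exact S.eq_of_decomposition_eq At hT hv hzy hf.1 hv' hzy' hf'.1 h

end GrubbExt
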